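/- arXiv:1211.0998 — 4 statements merged into one kernel-verified Lean document; each statement's English description precedes it below -/
import Mathlib

section
/- For every r ∈ ℤ_{≥0}, every a_r-module M, every α ∈ ℂ, and all m, k ∈ ℤ, the operators D_m on N(M,α) satisfy D_m ∘ D_k − D_k ∘ D_m = (k−m)·D_{m+k}. In particular the assignment d_m ↦ D_m, c ↦ 0 makes N(M,α) into a module over the Virasoro algebra with trivial central action. -/
open Finsupp

variable {M : Type*} [AddCommGroup M] [Module ℂ M]

/-- `(M, T)` is an `a_r`-module: `M` carries operators `T_0, …, T_r` with
`T_i∘T_j − T_j∘T_i = (j−i)·T_{i+j}` for `i+j ≤ r` and `T_i∘T_j = T_j∘T_i` for `i+j > r`. -/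
def IsArModule (r : ℕ) (T : ℕ → Module.End ℂ M) : Prop :=
  (∀ i j, i ≤ r → j ≤ r → i + j ≤ r →
      T i ∘ₗ T j - T j ∘ₗ T i = (((j : ℂ) - (i : ℂ)) • T (i + j))) ∧
  (∀ i j, i ≤ r → j ≤ r → r < i + j → T i ∘ₗ T j = T j ∘ₗ T i)

/-- A subspace `U ⊆ M` is an `a_r`-submodule if `T_i U ⊆ U` for all `0 ≤ i ≤ r`. -/
def IsArSubmodule (r : ℕ) (T : ℕ → Module.End ℂ M) (U : Submodule ℂ M) : Prop :=
  ∀ i ≤ r, ∀ v ∈ U, T i v ∈ U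

/-- `M` is a simple `a_r`-module: nonzero, and the only `a_r`-submodules are `0` and `M`. -/
def IsSimpleArModule (r : ℕ) (T : ℕ → Module.End ℂ M) : Prop :=
  (∃ v : M, v ≠ 0) ∧
    ∀ U : Submodule ℂ M, IsArSubmodule r T U → U = ⊥ ∨ U = ⊤

/-- The operator `D_m` on `N(M, α) = ⊕_{n ∈ ℤ} M ⊗ t^n` (finitely supported functions `ℤ → M`,
with `v ⊗ t^n` the function `Finsupp.single n v`), given by
`D_m (v ⊗ t^n) = ((α+n)•v + Σ_{i=0}^r (m^{i+1}/(i+1)!) • T_i v) ⊗ t^{n+m}`. -/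
noncomputable def Dop (r : ℕ) (T : ℕ → Module.End ℂ M) (α : ℂ) (m : ℤ) :
    (ℤ →₀ M) →ₗ[ℂ] (ℤ →₀ M) :=
  Finsupp.lsum ℂ fun n : ℤ =>
    (Finsupp.lsingle (n + m) : M →ₗ[ℂ] ℤ →₀ M) ∘ₗ
      ((α + (n : ℂ)) • (LinearMap.id : M →ₗ[ℂ] M) +
        ∑ i ∈ Finset.range (r + 1),
          ((m : ℂ) ^ (i + 1) / (Nat.factorial (i + 1) : ℂ)) • (T i : M →ₗ[ℂ] M))

/-- The operator `ω^{(s)}_{l,m} = Σ_{i=0}^s binom(s,i)·(−1)^{s−i}·D_{l−m−i}∘D_{m+i}`. -/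
noncomputable def omegaOp (r : ℕ) (T : ℕ → Module.End ℂ M) (α : ℂ) (s : ℕ) (l m : ℤ) :
    (ℤ →₀ M) →ₗ[ℂ] (ℤ →₀ M) :=
  ∑ i ∈ Finset.range (s + 1),
    ((s.choose i : ℂ) * (-1) ^ (s - i)) •
      (Dop r T α (l - m - (i : ℤ)) ∘ₗ Dop r T α (m + (i : ℤ)))

/-!
On `v ⊗ tⁿ` the operator `D_m` acts as `(α + n) + P(m)` followed by the shift `n ↦ n + m`, where
`P(x) = arOp r T x = ∑_{i ≤ r} x^{i+1}/(i+1)! T_i`. The relation `[D_m, D_k] = (k - m) D_{m+k}` therefore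
reduces to `k P(k) - m P(m) + [P(m), P(k)] = (k - m) P(m + k)` in `End M`. The `a_r` relations
collapse `[P(m), P(k)]` onto the `T_s`, `s ≤ r`, and comparing coefficients leaves an identity
between the Taylor coefficients `x^a/a!`, which follows from the binomial theorem
`∑_{a+b=n} x^a/a! y^b/b! = (x+y)^n/n!` together with `b y^b/b! = y y^{b-1}/(b-1)!`.
-/

open Finset
open scoped Nat

section ExpCoefficients

variable {K : Type*} [Field K] [CharZero K]

theorem add_pow_div_factorial (x y : K) (n : ℕ) :
    (x + y) ^ n / n ! = ∑ p ∈ antidiagonal n, x ^ p.1 / p.1 ! * (y ^ p.2 / p.2 !) := by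
  rw [(Commute.all x y).add_pow', sum_div]
  refine sum_congr rfl fun p hp => ?_
  rw [← mem_antidiagonal.mp hp, nsmul_eq_mul, Nat.cast_add_choose]
  field_simp [Nat.factorial_ne_zero]

theorem pow_succ_div_factorial_mul (x : K) (n : ℕ) :
    x ^ (n + 1) / (n + 1)! * ((n + 1 : ℕ) : K) = x * (x ^ n / n !) := by
  rw [Nat.factorial_succ]
  push_cast
  field_simp
  ring

theorem sum_antidiagonal_succ_pow_div_factorial_mul_snd (x y : K) (n : ℕ) :
    ∑ p ∈ antidiagonal (n + 1), x ^ p.1 / p.1 ! * (y ^ p.2 / p.2 !) * p.2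
      = y * ((x + y) ^ n / n !) := by
  rw [Nat.sum_antidiagonal_succ', add_pow_div_factorial, Finset.mul_sum]
  simp only [Nat.cast_zero, mul_zero, zero_add]
  refine sum_congr rfl fun p _ => ?_
  rw [mul_assoc, pow_succ_div_factorial_mul]
  ring

theorem sum_antidiagonal_succ_pow_div_factorial_mul_fst (x y : K) (n : ℕ) :
    ∑ p ∈ antidiagonal (n + 1), x ^ p.1 / p.1 ! * (y ^ p.2 / p.2 !) * p.1
      = x * ((x + y) ^ n / n !) := by
  rw [Nat.sum_antidiagonal_succ, add_pow_div_factorial, Finset.mul_sum]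
  simp only [Nat.cast_zero, mul_zero, zero_add]
  refine sum_congr rfl fun p _ => ?_
  rw [mul_right_comm, pow_succ_div_factorial_mul]
  ring

theorem sum_antidiagonal_pow_succ_div_factorial_mul_sub (x y : K) (s : ℕ) :
    y * (y ^ (s + 1) / (s + 1)!) - x * (x ^ (s + 1) / (s + 1)!)
      + ∑ p ∈ antidiagonal s,
          x ^ (p.1 + 1) / (p.1 + 1)! * (y ^ (p.2 + 1) / (p.2 + 1)!) * ((p.2 : K) - p.1)
      = (y - x) * ((x + y) ^ (s + 1) / (s + 1)!) := by
  -- Both sides are `∑_{a+b=s+2} x^a/a! * y^b/b! * (b - a)`: the first two terms on the left are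
  -- the summands with `a = 0` and `b = 0`.
  rw [sub_mul, ← sum_antidiagonal_succ_pow_div_factorial_mul_snd,
    ← sum_antidiagonal_succ_pow_div_factorial_mul_fst, ← sum_sub_distrib,
    Nat.sum_antidiagonal_succ, Nat.sum_antidiagonal_succ']
  simp only [← mul_sub, pow_zero, Nat.factorial_zero, Nat.cast_one, div_one, one_mul, mul_one,
    Nat.cast_zero, pow_succ_div_factorial_mul]
  push_cast
  simp only [add_sub_add_right_eq_sub]
  ring

end ExpCoefficients

theorem sum_range_sum_range_ite_add_lt {β : Type*} [AddCommMonoid β] (n : ℕ)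
    (f : ℕ → ℕ → β) :
    ∑ i ∈ range n, ∑ j ∈ range n, (if i + j < n then f i j else 0)
      = ∑ s ∈ range n, ∑ p ∈ antidiagonal s, f p.1 p.2 := by
  simp_rw [Nat.sum_antidiagonal_eq_sum_range_succ f, sum_range_diag_flip]
  refine sum_congr rfl fun i hi => ?_
  rw [← sum_filter]
  congr 1
  ext j
  simp only [mem_filter, mem_range] at hi ⊢
  omega

theorem commutator_sum_smul {ι R A : Type*} [CommSemiring R] [Ring A] [Algebra R A]
    (s : Finset ι) (a b : ι → R) (T : ι → A) :
    (∑ i ∈ s, a i • T i) * (∑ j ∈ s, b j • T j) - (∑ j ∈ s, b j • T j) * (∑ i ∈ s, a i • T i)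
      = ∑ i ∈ s, ∑ j ∈ s, (a i * b j) • (T i * T j - T j * T i) := by
  rw [sum_mul_sum, sum_mul_sum, Finset.sum_comm (f := fun j i => (b j • T j) * (a i • T i)),
    ← sum_sub_distrib]
  refine sum_congr rfl fun i _ => ?_
  rw [← sum_sub_distrib]
  refine sum_congr rfl fun j _ => ?_
  rw [smul_mul_smul_comm, smul_mul_smul_comm, mul_comm (b j), smul_sub]

noncomputable def arOp (r : ℕ) (T : ℕ → Module.End ℂ M) (x : ℂ) : Module.End ℂ M :=
  ∑ i ∈ range (r + 1), (x ^ (i + 1) / (i + 1)! : ℂ) • T i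

theorem Dop_single (r : ℕ) (T : ℕ → Module.End ℂ M) (α : ℂ) (m n : ℤ) (v : M) :
    Dop r T α m (Finsupp.single n v) = Finsupp.single (n + m) ((α + n) • v + arOp r T m v) := by
  simp [Dop, arOp, LinearMap.sum_apply]

namespace IsArModule

variable {r : ℕ} {T : ℕ → Module.End ℂ M}

theorem commutator_eq (hT : IsArModule r T) {i j : ℕ} (hi : i < r + 1) (hj : j < r + 1) :
    T i * T j - T j * T i = if i + j < r + 1 then ((j : ℂ) - i) • T (i + j) else 0 := by
  split_ifs with hij
  · exact hT.1 i j (by omega) (by omega) (by omega)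
  · exact sub_eq_zero.2 (hT.2 i j (by omega) (by omega) (by omega))

theorem arOp_commutator (hT : IsArModule r T) (x y : ℂ) :
    arOp r T x * arOp r T y - arOp r T y * arOp r T x
      = ∑ s ∈ range (r + 1), (∑ p ∈ antidiagonal s,
          x ^ (p.1 + 1) / (p.1 + 1)! * (y ^ (p.2 + 1) / (p.2 + 1)!) * ((p.2 : ℂ) - p.1)) • T s := by
  set c : ℂ → ℕ → ℂ := fun z i => z ^ (i + 1) / (i + 1)!
  calc arOp r T x * arOp r T y - arOp r T y * arOp r T x
      = ∑ i ∈ range (r + 1), ∑ j ∈ range (r + 1), (c x i * c y j) • (T i * T j - T j * T i) :=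
        commutator_sum_smul _ _ _ _
    _ = ∑ i ∈ range (r + 1), ∑ j ∈ range (r + 1),
          if i + j < r + 1 then (c x i * c y j * ((j : ℂ) - i)) • T (i + j) else 0 := by
        refine sum_congr rfl fun i hi => sum_congr rfl fun j hj => ?_
        rw [hT.commutator_eq (mem_range.1 hi) (mem_range.1 hj), smul_ite, smul_smul, smul_zero]
    _ = ∑ s ∈ range (r + 1), ∑ p ∈ antidiagonal s,
          (c x p.1 * c y p.2 * ((p.2 : ℂ) - p.1)) • T (p.1 + p.2) :=
        sum_range_sum_range_ite_add_lt _ fun i j => (c x i * c y j * ((j : ℂ) - i)) • T (i + j)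
    _ = _ := by
        simp_rw [sum_smul]
        exact sum_congr rfl fun s _ => (Nat.sum_antidiagonal_subst
          (f := fun p n => (c x p.1 * c y p.2 * ((p.2 : ℂ) - p.1)) • T n)).symm

theorem arOp_bracket (hT : IsArModule r T) (x y : ℂ) :
    y • arOp r T y - x • arOp r T x + (arOp r T x * arOp r T y - arOp r T y * arOp r T x)
      = (y - x) • arOp r T (x + y) := by
  rw [hT.arOp_commutator, arOp, arOp, arOp, Finset.smul_sum, Finset.smul_sum, Finset.smul_sum,
    ← sum_sub_distrib, ← sum_add_distrib]
  refine sum_congr rfl fun s _ => ?_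
  rw [smul_smul, smul_smul, smul_smul, ← sub_smul, ← add_smul,
    sum_antidiagonal_pow_succ_div_factorial_mul_sub]

end IsArModule

/-- for every `a_r`-module `M` and every `α ∈ ℂ`, the operators `D_m` on `N(M,α)`
satisfy `D_m ∘ D_k − D_k ∘ D_m = (k−m) • D_{m+k}`; in particular `d_m ↦ D_m`, `c ↦ 0` makes
`N(M,α)` a module over the Virasoro algebra with trivial central action. -/
theorem virasoro_relation_on_N (r : ℕ) (T : ℕ → Module.End ℂ M)
    (hT : IsArModule r T) (α : ℂ) (m k : ℤ) :
    Dop r T α m ∘ₗ Dop r T α k - Dop r T α k ∘ₗ Dop r T α m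
      = ((k : ℂ) - (m : ℂ)) • Dop r T α (m + k) := by
  refine Finsupp.lhom_ext fun n v => ?_
  have key := LinearMap.congr_fun (hT.arOp_bracket m k) v
  simp only [LinearMap.sub_apply, LinearMap.add_apply, LinearMap.smul_apply,
    Module.End.mul_apply] at key
  simp only [LinearMap.sub_apply, LinearMap.comp_apply, LinearMap.smul_apply, Dop_single,
    Finsupp.smul_single, map_add, map_smul, add_right_comm n k m, add_assoc n, ← Finsupp.single_sub]
  congr 1
  push_cast
  linear_combination (norm := module) key
end

section
/- Fix α₁, λ₁, λ₂ ∈ ℂ with λ₁ ≠ 0 or λ₂ ≠ 0. Consider ℂ[x] with the operators T_0 f(x) = (x+α₁)·f(x), T_1 f(x) = λ₁·f(x−1), T_2 f(x) = λ₂·f(x−2). Then the only subspaces U ⊆ ℂ[x] with T_0 U ⊆ U, T_1 U ⊆ U and T_2 U ⊆ U are 0 and ℂ[x]; i.e., ℂ[x] is a simple a_2-module. -/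
/-! A nonzero `λᵢ` makes a shift `f ↦ f(x - c)` with `c ≠ 0` preserve `U`. Since `f(x - c) - f`
has smaller degree than `f` unless `f` is constant, a nonzero invariant `U` contains a nonzero
constant, hence `1`; and `X = T_0 - α₁` then generates all of `ℂ[x]` from `1`. -/

open Polynomial

namespace Polynomial

variable {R : Type*}

theorem degree_taylor_sub_lt [CommRing R] {f : R[X]} (hf : f ≠ 0) (r : R) :
    (taylor r f - f).degree < f.degree := by
  have := degree_sub_lt_left (degree_taylor f r) ((taylor_eq_zero r f).not.mpr hf)
    (leadingCoeff_taylor r f)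
  rwa [degree_taylor] at this

/-- `f` takes the value `f(0)` at the infinitely many points `n * r`. -/
theorem eq_C_of_taylor_eq_self [CommRing R] [IsDomain R] [CharZero R] {r : R} (hr : r ≠ 0)
    {f : R[X]} (h : taylor r f = f) : f = C (f.eval 0) := by
  have periodic : Function.Periodic (fun x => f.eval x) r := fun x => by
    simp only [← taylor_eval, h]
  refine eq_of_infinite_eval_eq _ _ ((Set.infinite_range_of_injective
    (f := fun n : ℕ => (n : R) * r) fun m n hmn => ?_).mono ?_)
  · simpa [hr] using hmn
  · rintro _ ⟨n, rfl⟩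
    simpa using periodic.nat_mul_eq n

end Polynomial

namespace Submodule

variable {K : Type*} [Field K]

theorem taylor_mem_of_smul_comp_X_sub_C_mem {U : Submodule K K[X]} {lam c : K} (hlam : lam ≠ 0)
    (h : ∀ f ∈ U, lam • f.comp (X - C c) ∈ U) {f : K[X]} (hf : f ∈ U) : taylor (-c) f ∈ U := by
  rw [taylor_apply, C_neg, ← sub_eq_add_neg]
  exact (U.smul_mem_iff hlam).mp (h f hf)

theorem one_mem_of_taylor_mem [CharZero K] {U : Submodule K K[X]} {r : K} (hr : r ≠ 0)
    (hU : ∀ f ∈ U, taylor r f ∈ U) (hne : U ≠ ⊥) : (1 : K[X]) ∈ U := by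
  obtain ⟨f, hfU, hf⟩ := exists_mem_ne_zero_of_ne_bot hne
  induction hn : f.natDegree using Nat.strong_induction_on generalizing f with
  | _ n ih =>
  by_cases hfix : taylor r f = f
  · have hC := eq_C_of_taylor_eq_self hr hfix
    have ha : f.eval 0 ≠ 0 := fun h => hf (by rw [hC, h, C_0])
    rw [hC, ← mul_one (C _), ← smul_eq_C_mul, U.smul_mem_iff ha] at hfU
    exact hfU
  · have hg : taylor r f - f ≠ 0 := sub_ne_zero.mpr hfix
    exact ih _ (hn ▸ natDegree_lt_natDegree hg (degree_taylor_sub_lt hf r)) _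
      (U.sub_mem (hU f hfU) hfU) hg rfl

theorem eq_top_of_one_mem_of_X_mul_mem {R : Type*} [CommSemiring R] {U : Submodule R R[X]}
    (h1 : (1 : R[X]) ∈ U) (hX : ∀ f ∈ U, X * f ∈ U) : U = ⊤ := by
  refine eq_top_iff'.mpr fun p => ?_
  induction p using Polynomial.induction_on with
  | C a => simpa [smul_eq_C_mul] using U.smul_mem a h1
  | add p q hp hq => exact U.add_mem hp hq
  | monomial n a h =>
    convert hX _ h using 1
    ring

end Submodule

/-- with `λ₁ ≠ 0` or `λ₂ ≠ 0`, the `a_2`-module `ℂ[x]` with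
`T_0 f = (x+α₁)·f`, `T_1 f = λ₁·f(x−1)`, `T_2 f = λ₂·f(x−2)` is simple: the only subspaces
invariant under `T_0, T_1, T_2` are `0` and `ℂ[x]`. -/
theorem polynomial_a2_module_simple (α₁ lam₁ lam₂ : ℂ) (hlam : lam₁ ≠ 0 ∨ lam₂ ≠ 0)
    (U : Submodule ℂ ℂ[X])
    (hU0 : ∀ f ∈ U, (X + C α₁) * f ∈ U)
    (hU1 : ∀ f ∈ U, lam₁ • f.comp (X - C 1) ∈ U)
    (hU2 : ∀ f ∈ U, lam₂ • f.comp (X - C 2) ∈ U) :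
    U = ⊥ ∨ U = ⊤ := by
  obtain ⟨r, hr, hshift⟩ : ∃ r : ℂ, r ≠ 0 ∧ ∀ f ∈ U, taylor r f ∈ U := by
    rcases hlam with h | h
    · exact ⟨-1, by norm_num, fun f => U.taylor_mem_of_smul_comp_X_sub_C_mem h hU1⟩
    · exact ⟨-2, by norm_num, fun f => U.taylor_mem_of_smul_comp_X_sub_C_mem h hU2⟩
  refine or_iff_not_imp_left.mpr fun hne => ?_
  refine U.eq_top_of_one_mem_of_X_mul_mem (U.one_mem_of_taylor_mem hr hshift hne) fun f hf => ?_
  have hXf : X * f = (X + C α₁) * f - α₁ • f := by rw [smul_eq_C_mul]; ring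
  rw [hXf]
  exact U.sub_mem (hU0 f hf) (U.smul_mem α₁ hf)
end

section
/- Let r ≥ 1, let M be a simple a_r-module such that T_r : M → M is injective, and let β ∈ ℂ[t,t⁻¹] be a nonconstant Laurent polynomial. Then N(M,β) is simple: the only subspaces W ⊆ N(M,0) with D^β_n W ⊆ W for all n ∈ ℤ are 0 and the whole space. -/
/-!
Write `D^β_n = shift n ∘ R(n)` with `R(x) = deg + β + Σ_{i ≤ r} x^{i+1}/(i+1)! · T_i`, where `deg`
multiplies `v ⊗ t^k` by `k` and `β` acts by multiplication. Since
`R(x) ∘ shift b = shift b ∘ (R(x) + b)`, the product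
`D^β_{-c} D^β_N D^β_c = shift N ∘ (R(-c) + N + c) (R(N) + c) R(c)` is a polynomial in `c` whose
coefficient of `c^{2r+3}` is a nonzero multiple of `shift N ∘ T_r²`. A coefficient of an operator
polynomial whose values at all integers preserve `W` again preserves `W`, so `W` is stable under
`shift N ∘ T_r²` and, as `D^β_0 = deg + β`, under `(deg - j) ∘ T_r²`. Applying the latter for the
degrees `j ≠ k₀` of some `0 ≠ w ∈ W` isolates a nonzero `v ⊗ t^{k₀} ∈ W`, because `T_r` is
injective. Hence `U = {v | v ⊗ t^k ∈ W for all k}` is nonzero; it is an `a_r`-submodule because the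
`T_i v ⊗ t^k` are, modulo `W`, the coefficients of the polynomial `n ↦ D^β_n (v ⊗ t^{k-n})`.
So `U = M`, and `W` is everything.
-/

open Finsupp

variable {M : Type*} [AddCommGroup M] [Module ℂ M]

/-- The multiplication operator by `β t^n`, where `β = Σ_j b_j t^j` is a Laurent polynomial
(encoded as the finitely supported family `β : ℤ →₀ ℂ` of its coefficients):
`v ⊗ t^k ↦ Σ_j b_j • (v ⊗ t^{k+n+j})`. -/
noncomputable def Bop (β : ℤ →₀ ℂ) (n : ℤ) : (ℤ →₀ M) →ₗ[ℂ] (ℤ →₀ M) :=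
  Finsupp.lsum ℂ fun k : ℤ =>
    ∑ j ∈ β.support, β j • (Finsupp.lsingle (k + n + j) : M →ₗ[ℂ] ℤ →₀ M)

/-- The twisted operator `D^β_n = D_n + β t^n` on `N(M,β) = N(M,0)`:
`D^β_n (v ⊗ t^k) = D_n (v ⊗ t^k) + Σ_j b_j • (v ⊗ t^{k+n+j})`. -/
noncomputable def DBop (r : ℕ) (T : ℕ → Module.End ℂ M) (β : ℤ →₀ ℂ) (n : ℤ) :
    (ℤ →₀ M) →ₗ[ℂ] (ℤ →₀ M) :=
  Dop r T 0 n + Bop β n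

section CoefficientExtraction

open Polynomial

variable {K V A : Type*} [Field K] [AddCommGroup V] [Module K V] [Ring A] [Algebra K A]

theorem Submodule.mem_of_forall_sum_pow_smul_mem [CharZero K] (U : Submodule K V) {ι : Type*}
    {s : Finset ι} {e : ι → ℕ} (he : Set.InjOn e s) {a : ι → V}
    (h : ∀ n : ℤ, ∑ y ∈ s, (n : K) ^ e y • a y ∈ U) {x : ι} (hx : x ∈ s) : a x ∈ U := by
  -- each functional on `V ⧸ U` turns the family into a scalar polynomial vanishing on `ℤ`
  rw [← Submodule.Quotient.mk_eq_zero, ← Module.forall_dual_apply_eq_zero_iff K]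
  intro φ
  let p : K[X] := ∑ y ∈ s, monomial (e y) ((φ ∘ₗ U.mkQ) (a y))
  have hp : p = 0 := by
    refine eq_zero_of_infinite_isRoot p
      (Set.infinite_of_injective_forall_mem Int.cast_injective fun n => ?_)
    have : (φ ∘ₗ U.mkQ) (∑ y ∈ s, (n : K) ^ e y • a y) = 0 := by
      rw [LinearMap.comp_apply, Submodule.mkQ_apply, (Submodule.Quotient.mk_eq_zero U).2 (h n),
        map_zero]
    simpa [p, eval_finsetSum, mul_comm] using this
  have hx' := congrArg (coeff · (e x)) hp
  simp only [p, finsetSum_coeff, coeff_monomial, coeff_zero] at hx'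
  rwa [Finset.sum_eq_single_of_mem x hx fun y hy hyx => if_neg (mt (he hy hx) hyx), if_pos rfl]
    at hx'

namespace Polynomial

/-- Unlike `Polynomial.eval`, evaluation at a scalar is multiplicative over noncommutative `A`. -/
def evalScalar (c : K) : A[X] →+* A :=
  eval₂RingHom' (RingHom.id A) (algebraMap K A c) fun a => (Algebra.commutes c a).symm

@[simp] theorem evalScalar_C (c : K) (a : A) : evalScalar c (C a) = a := eval₂_C _ _

@[simp] theorem evalScalar_X (c : K) : evalScalar c (X : A[X]) = algebraMap K A c := eval₂_X _ _

@[simp] theorem evalScalar_monomial (c : K) (n : ℕ) (a : A) :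
    evalScalar c (monomial n a) = c ^ n • a := by
  change eval₂ _ _ _ = _
  rw [eval₂_monomial, RingHom.id_apply, ← map_pow, Algebra.smul_def, Algebra.commutes]

theorem evalScalar_eq_sum_range (c : K) (p : A[X]) :
    evalScalar c p = ∑ i ∈ Finset.range (p.natDegree + 1), c ^ i • p.coeff i := by
  conv_lhs => rw [p.as_sum_range]
  simp

theorem coeff_mem_of_forall_evalScalar_mem [CharZero K] (S : Submodule K A) (p : A[X])
    (h : ∀ n : ℤ, evalScalar (n : K) p ∈ S) (d : ℕ) : p.coeff d ∈ S := by
  rcases lt_or_ge p.natDegree d with hd | hd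
  · simp [coeff_eq_zero_of_natDegree_lt hd]
  · refine S.mem_of_forall_sum_pow_smul_mem (Set.injOn_id _) (fun n => ?_)
      (Finset.mem_range.2 (Nat.lt_succ_of_le hd))
    simpa [evalScalar_eq_sum_range] using h n

end Polynomial

end CoefficientExtraction

section Stabilizer

variable {K V : Type*} [Field K] [AddCommGroup V] [Module K V]

def Submodule.stabilizerSubalgebra (W : Submodule K V) : Subalgebra K (Module.End K V) where
  carrier := {X | ∀ w ∈ W, X w ∈ W}
  mul_mem' hX hY w hw := hX _ (hY w hw)
  one_mem' _ hw := hw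
  add_mem' hX hY w hw := W.add_mem (hX w hw) (hY w hw)
  zero_mem' _ _ := W.zero_mem
  algebraMap_mem' c _ hw := W.smul_mem c hw

theorem Submodule.mem_stabilizerSubalgebra {W : Submodule K V} {X : Module.End K V} :
    X ∈ W.stabilizerSubalgebra ↔ ∀ w ∈ W, X w ∈ W := Iff.rfl

end Stabilizer

section SingleCore

variable {R ι N : Type*} [Semiring R] [AddCommMonoid N] [Module R N]

noncomputable def Submodule.singleCore (W : Submodule R (ι →₀ N)) : Submodule R N :=
  ⨅ k, W.comap (lsingle k)

theorem Submodule.mem_singleCore {W : Submodule R (ι →₀ N)} {v : N} :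
    v ∈ W.singleCore ↔ ∀ k, single k v ∈ W := by
  simp [singleCore, Submodule.mem_iInf]

theorem Submodule.eq_top_of_singleCore_eq_top {W : Submodule R (ι →₀ N)}
    (h : W.singleCore = ⊤) : W = ⊤ := by
  refine Submodule.eq_top_iff'.2 fun x => ?_
  induction x using Finsupp.induction_linear with
  | zero => exact W.zero_mem
  | add x y hx hy => exact W.add_mem hx hy
  | single k v => exact mem_singleCore.1 (h ▸ Submodule.mem_top) k

end SingleCore

namespace TwistedN

noncomputable def shift (N : ℤ) : Module.End ℂ (ℤ →₀ M) := lmapDomain M ℂ (· + N)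

noncomputable def degreeOp : Module.End ℂ (ℤ →₀ M) := lsum ℂ fun k : ℤ => (k : ℂ) • lsingle k

noncomputable def twistOp (β : ℤ →₀ ℂ) : Module.End ℂ (ℤ →₀ M) := ∑ j ∈ β.support, β j • shift j

noncomputable def weightOp (r : ℕ) (T : ℕ → Module.End ℂ M) (β : ℤ →₀ ℂ) (x : ℂ) :
    Module.End ℂ (ℤ →₀ M) :=
  degreeOp + twistOp β + ∑ i ∈ Finset.range (r + 1),
    (x ^ (i + 1) / (Nat.factorial (i + 1) : ℂ)) • mapRange.linearMap (T i)

@[simp] theorem shift_single (N k : ℤ) (v : M) : shift N (single k v) = single (k + N) v := by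
  simp [shift]

@[simp] theorem degreeOp_single (k : ℤ) (v : M) :
    degreeOp (single k v) = (k : ℂ) • single k v := by
  simp [degreeOp]

theorem degreeOp_apply (w : ℤ →₀ M) (k : ℤ) : degreeOp w k = (k : ℂ) • w k := by
  induction w using Finsupp.induction_linear with
  | zero => simp
  | add x y hx hy => simp [hx, hy]
  | single j v => by_cases h : j = k <;> simp [h]

theorem twistOp_single (β : ℤ →₀ ℂ) (k : ℤ) (v : M) :
    twistOp β (single k v) = ∑ j ∈ β.support, β j • single (k + j) v := by
  simp [twistOp, LinearMap.sum_apply]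

theorem shift_add (a b : ℤ) : (shift (a + b) : Module.End ℂ (ℤ →₀ M)) = shift a * shift b := by
  ext k v : 2
  simp [add_right_comm, add_assoc]

@[simp] theorem shift_zero : (shift 0 : Module.End ℂ (ℤ →₀ M)) = 1 := by
  ext k v : 2
  simp

variable {r : ℕ} {T : ℕ → Module.End ℂ M} {β : ℤ →₀ ℂ}

theorem DBop_single (n m : ℤ) (v : M) :
    DBop r T β n (single m v) = single (m + n) ((m : ℂ) • v + ∑ i ∈ Finset.range (r + 1),
        ((n : ℂ) ^ (i + 1) / (Nat.factorial (i + 1) : ℂ)) • T i v) +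
      ∑ j ∈ β.support, β j • single (m + n + j) v := by
  simp [DBop, Dop, Bop, LinearMap.sum_apply]

theorem DBop_eq_shift_mul_weightOp (n : ℤ) :
    DBop r T β n = shift n * weightOp r T β n := by
  ext k v : 2
  simp [DBop_single, weightOp, twistOp_single, LinearMap.sum_apply, single_finsetSum,
    add_right_comm _ n]
  abel

theorem weightOp_add_smul_one_mul_shift (x t : ℂ) (b : ℤ) :
    (weightOp r T β x + t • 1) * shift b = shift b * (weightOp r T β x + (t + b) • 1) := by
  ext k v : 2
  simp [weightOp, twistOp_single, LinearMap.sum_apply, add_right_comm _ b, add_smul]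
  abel

theorem DBop_neg_mul_DBop_mul_DBop (N c : ℤ) :
    DBop r T β (-c) * DBop r T β N * DBop r T β c =
      shift N * ((weightOp r T β (-c) + ((N : ℂ) + c) • 1) *
        ((weightOp r T β N + (c : ℂ) • 1) * weightOp r T β c)) := by
  have hcomm (x t : ℂ) (b : ℤ) (Y : Module.End ℂ (ℤ →₀ M)) :
      (weightOp r T β x + t • 1) * (shift b * Y) =
        shift b * ((weightOp r T β x + (t + b) • 1) * Y) := by
    rw [← mul_assoc, weightOp_add_smul_one_mul_shift, mul_assoc]
  have hcomm₀ (x : ℂ) (b : ℤ) (Y : Module.End ℂ (ℤ →₀ M)) :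
      weightOp r T β x * (shift b * Y) = shift b * ((weightOp r T β x + (b : ℂ) • 1) * Y) := by
    simpa only [zero_smul, add_zero, zero_add] using hcomm x 0 b Y
  simp only [DBop_eq_shift_mul_weightOp, Int.cast_neg, mul_assoc, hcomm₀, hcomm]
  rw [← mul_assoc, ← mul_assoc, ← shift_add, ← shift_add, neg_add_cancel_comm]

section Polynomials

open Polynomial

variable (r T β) in
noncomputable def weightPoly (s : ℂ) : (Module.End ℂ (ℤ →₀ M))[X] :=
  C (degreeOp + twistOp β) + ∑ i ∈ Finset.range (r + 1),
    monomial (i + 1) ((s ^ (i + 1) / (Nat.factorial (i + 1) : ℂ)) • mapRange.linearMap (T i))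

theorem evalScalar_weightPoly (s c : ℂ) :
    evalScalar c (weightPoly r T β s) = weightOp r T β (s * c) := by
  simp only [weightPoly, weightOp, map_add, map_sum, evalScalar_C, evalScalar_monomial, smul_smul]
  congr 1
  exact Finset.sum_congr rfl fun i _ => by rw [mul_pow]; ring_nf

theorem natDegree_weightPoly_le (s : ℂ) : (weightPoly r T β s).natDegree ≤ r + 1 :=
  natDegree_add_le_of_degree_le (by simp) <| natDegree_sum_le_of_forall_le _ _ fun i hi =>
    (natDegree_monomial_le _).trans (by simpa using hi)

theorem coeff_weightPoly_top (s : ℂ) :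
    (weightPoly r T β s).coeff (r + 1) =
      (s ^ (r + 1) / (Nat.factorial (r + 1) : ℂ)) • mapRange.linearMap (T r) := by
  simp [weightPoly, finsetSum_coeff, coeff_monomial]

theorem shift_mul_mapRange_sq_mem (hr : 1 ≤ r) {W : Submodule ℂ (ℤ →₀ M)}
    (hW : ∀ n : ℤ, DBop r T β n ∈ W.stabilizerSubalgebra) (N : ℤ) :
    shift N * mapRange.linearMap (T r * T r) ∈ W.stabilizerSubalgebra := by
  set S := W.stabilizerSubalgebra
  set L := weightPoly r T β (-1) + C ((N : ℂ) • 1) + X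
  set Mid : (Module.End ℂ (ℤ →₀ M))[X] := C (weightOp r T β N) + X
  set R := weightPoly r T β 1
  have hL : L.natDegree ≤ r + 1 :=
    natDegree_add_le_of_degree_le (natDegree_add_le_of_degree_le (natDegree_weightPoly_le _)
      (by simp)) (natDegree_X_le.trans (by omega))
  have hMid : Mid.natDegree ≤ 1 := natDegree_add_le_of_degree_le (by simp) natDegree_X_le
  have heval (c : ℤ) : evalScalar (c : ℂ) (C (shift N) * (L * (Mid * R))) =
      DBop r T β (-c) * DBop r T β N * DBop r T β c := by
    simp only [L, Mid, R, map_mul, map_add, evalScalar_C, evalScalar_X, evalScalar_weightPoly,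
      Algebra.algebraMap_eq_smul_one, DBop_neg_mul_DBop_mul_DBop, add_smul, add_assoc,
      neg_one_mul, one_mul]
  have htop := coeff_mem_of_forall_evalScalar_mem S.toSubmodule _
    (fun c => (heval c).symm ▸ S.mul_mem (S.mul_mem (hW _) (hW _)) (hW _)) (r + 1 + (1 + (r + 1)))
  have hLtop : L.coeff (r + 1) =
      ((-1) ^ (r + 1) / (Nat.factorial (r + 1) : ℂ)) • mapRange.linearMap (T r) := by
    simp [L, coeff_weightPoly_top, coeff_X_of_ne_one (show r + 1 ≠ 1 by omega)]
  rw [coeff_C_mul, coeff_mul_add_eq_of_natDegree_le hL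
    (natDegree_mul_le_of_le hMid (natDegree_weightPoly_le _)),
    coeff_mul_add_eq_of_natDegree_le hMid (natDegree_weightPoly_le _), hLtop, coeff_weightPoly_top]
    at htop
  have hκ : (Nat.factorial (r + 1) : ℂ)⁻¹ * ((-1) ^ (r + 1) / (Nat.factorial (r + 1) : ℂ)) ≠ 0 := by
    simp [Nat.factorial_ne_zero]
  refine (S.toSubmodule.smul_mem_iff hκ).1 ?_
  simpa [Mid, mapRange.linearMap_comp, Module.End.mul_eq_comp, smul_mul_smul_comm, mul_smul_comm,
    smul_smul] using htop

end Polynomials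

theorem degreeOp_sub_smul_one_mul_mapRange_mem (hr : 1 ≤ r) {W : Submodule ℂ (ℤ →₀ M)}
    (hW : ∀ n : ℤ, DBop r T β n ∈ W.stabilizerSubalgebra) (j : ℤ) :
    (degreeOp - (j : ℂ) • 1) * mapRange.linearMap (T r * T r) ∈ W.stabilizerSubalgebra := by
  set S := W.stabilizerSubalgebra
  set Φ := mapRange.linearMap (T r * T r)
  have hΦ : ∀ N, shift N * Φ ∈ S := shift_mul_mapRange_sq_mem hr hW
  have hΦ₀ : Φ ∈ S := by simpa using hΦ 0
  have hD₀ : DBop r T β 0 = degreeOp + twistOp β := by simp [DBop_eq_shift_mul_weightOp, weightOp]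
  have htwist : twistOp β * Φ ∈ S := by
    rw [twistOp, Finset.sum_mul]
    exact S.sum_mem fun j _ => by rw [smul_mul_assoc]; exact S.smul_mem (hΦ j) _
  have hsplit : (degreeOp - (j : ℂ) • 1) * Φ =
      DBop r T β 0 * Φ - twistOp β * Φ - (j : ℂ) • Φ := by
    rw [hD₀, sub_mul, add_mul, smul_mul_assoc, one_mul, add_sub_cancel_right]
  rw [hsplit]
  exact S.sub_mem (S.sub_mem (S.mul_mem (hW 0) hΦ₀) htwist) (S.smul_mem hΦ₀ _)

theorem degreeOp_sub_smul_one_mul_mapRange_apply (a : ℤ) (ψ : Module.End ℂ M) (w : ℤ →₀ M)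
    (k : ℤ) : ((degreeOp - (a : ℂ) • 1) * mapRange.linearMap ψ : Module.End ℂ (ℤ →₀ M)) w k =
      ((k : ℂ) - a) • ψ (w k) := by
  simp [degreeOp_apply, sub_smul]

theorem exists_mem_apply_eq_prod_smul {ψ : Module.End ℂ M} {W : Submodule ℂ (ℤ →₀ M)}
    (hW : ∀ j : ℤ, ((degreeOp : Module.End ℂ (ℤ →₀ M)) - (j : ℂ) • 1) * mapRange.linearMap ψ ∈
      W.stabilizerSubalgebra)
    (t : Finset ℤ) {w : ℤ →₀ M} (hw : w ∈ W) :
    ∃ w' ∈ W, ∀ k, w' k = (∏ j ∈ t, ((k : ℂ) - j)) • (ψ ^ t.card) (w k) := by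
  induction t using Finset.induction_on with
  | empty => exact ⟨w, hw, by simp⟩
  | insert a t ha ih =>
    obtain ⟨w', hw', hw'k⟩ := ih
    refine ⟨_, hW a w' hw', fun k => ?_⟩
    rw [degreeOp_sub_smul_one_mul_mapRange_apply, hw'k, Finset.prod_insert ha,
      Finset.card_insert_of_notMem ha, pow_succ', Module.End.mul_apply, map_smul, smul_smul]

theorem exists_single_mem {ψ : Module.End ℂ M} (hψ : Function.Injective ψ)
    {W : Submodule ℂ (ℤ →₀ M)}
    (hW : ∀ j : ℤ, ((degreeOp : Module.End ℂ (ℤ →₀ M)) - (j : ℂ) • 1) * mapRange.linearMap ψ ∈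
      W.stabilizerSubalgebra)
    (hW₀ : W ≠ ⊥) : ∃ k u, u ≠ 0 ∧ single k u ∈ W := by
  obtain ⟨w, hw, hw₀⟩ := W.ne_bot_iff.1 hW₀
  obtain ⟨k₀, hk₀⟩ := Finsupp.support_nonempty_iff.2 hw₀
  obtain ⟨w', hw', hw'k⟩ := exists_mem_apply_eq_prod_smul hW (w.support.erase k₀) hw
  refine ⟨k₀, w' k₀, ?_, ?_⟩
  · rw [hw'k]
    refine smul_ne_zero (Finset.prod_ne_zero_iff.2 fun j hj => sub_ne_zero.2 ?_) fun h => ?_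
    · exact_mod_cast (Finset.ne_of_mem_erase hj).symm
    · have hψn : Function.Injective (ψ ^ (w.support.erase k₀).card) := by
        rw [Module.End.coe_pow]
        exact hψ.iterate _
      exact mem_support_iff.1 hk₀ ((map_eq_zero_iff _ hψn).1 h)
  · convert hw'
    ext k
    by_cases hk : k = k₀
    · simp [hk]
    rw [single_apply, if_neg (Ne.symm hk), hw'k]
    by_cases hks : k ∈ w.support
    · rw [Finset.prod_eq_zero (Finset.mem_erase.2 ⟨hk, hks⟩) (sub_self (k : ℂ)), zero_smul]
    · rw [notMem_support_iff.1 hks, map_zero, smul_zero]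

theorem isArSubmodule_singleCore {W : Submodule ℂ (ℤ →₀ M)}
    (hW : ∀ n : ℤ, ∀ w ∈ W, DBop r T β n w ∈ W) : IsArSubmodule r T W.singleCore := by
  intro i hi v hv
  rw [Submodule.mem_singleCore] at hv ⊢
  intro k
  set U := W.comap (lsingle k)
  have hpoly (n : ℤ) : ∑ i ∈ Finset.range (r + 1),
      (n : ℂ) ^ (i + 1) • ((Nat.factorial (i + 1) : ℂ)⁻¹ • T i v) ∈ U := by
    have h := hW n _ (hv (k - n))
    rw [DBop_single, sub_add_cancel] at h
    have htwist : ∑ j ∈ β.support, β j • single (k + j) v ∈ W :=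
      W.sum_mem fun j _ => W.smul_mem (β j) (hv (k + j))
    have := W.sub_mem (W.sub_mem h htwist) (W.smul_mem ((k - n : ℤ) : ℂ) (hv k))
    simpa [U, single_add, single_finsetSum, smul_smul, div_eq_mul_inv] using this
  have hi' := U.mem_of_forall_sum_pow_smul_mem (fun _ _ _ _ h => Nat.succ_injective h) hpoly
    (Finset.mem_range.2 (Nat.lt_succ_of_le hi))
  exact (U.smul_mem_iff (by simp [Nat.factorial_ne_zero])).1 hi'

end TwistedN

theorem twisted_N_simple_general (r : ℕ) (hr : 1 ≤ r) (T : ℕ → Module.End ℂ M)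
    (hsimple : IsSimpleArModule r T)
    (hinj : Function.Injective (T r))
    (β : ℤ →₀ ℂ)
    (W : Submodule ℂ (ℤ →₀ M)) (hW : ∀ n : ℤ, ∀ w ∈ W, DBop r T β n w ∈ W) :
    W = ⊥ ∨ W = ⊤ := by
  by_cases hW₀ : W = ⊥
  · exact Or.inl hW₀
  have hD (n : ℤ) : DBop r T β n ∈ W.stabilizerSubalgebra :=
    Submodule.mem_stabilizerSubalgebra.2 (hW n)
  have hψ : Function.Injective (T r * T r) := hinj.comp hinj
  obtain ⟨k₀, u, hu, hk₀u⟩ := TwistedN.exists_single_mem hψ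
    (TwistedN.degreeOp_sub_smul_one_mul_mapRange_mem hr hD) hW₀
  have hψu : (T r * T r) u ∈ W.singleCore := Submodule.mem_singleCore.2 fun k => by
    simpa using TwistedN.shift_mul_mapRange_sq_mem hr hD (k - k₀) _ hk₀u
  rcases hsimple.2 _ (TwistedN.isArSubmodule_singleCore hW) with h | h
  · rw [h, Submodule.mem_bot] at hψu
    exact absurd ((map_eq_zero_iff _ hψ).1 hψu) hu
  · exact Or.inr (Submodule.eq_top_of_singleCore_eq_top h)

/-- for `r ≥ 1`, a simple `a_r`-module `M` with `T_r` injective, and a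
nonconstant Laurent polynomial `β`, the twisted module `N(M,β)` is simple: the only subspaces
`W` with `D^β_n W ⊆ W` for all `n ∈ ℤ` are `0` and the whole space. -/
theorem twisted_N_simple (r : ℕ) (hr : 1 ≤ r) (T : ℕ → Module.End ℂ M)
    (hT : IsArModule r T) (hsimple : IsSimpleArModule r T)
    (hinj : Function.Injective (T r))
    (β : ℤ →₀ ℂ) (hβ : ∃ j : ℤ, j ≠ 0 ∧ β j ≠ 0)
    (W : Submodule ℂ (ℤ →₀ M)) (hW : ∀ n : ℤ, ∀ w ∈ W, DBop r T β n w ∈ W) :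
    W = ⊥ ∨ W = ⊤ :=
  twisted_N_simple_general r hr T hsimple hinj β W hW
end

section
/- Let r ≥ 1, M an a_r-module, and β ∈ ℂ[t,t⁻¹]. Then for all l, m ∈ ℤ and all w ∈ N(M,0): Σ_{i=0}^{2r+2} binom(2r+2,i)·(−1)^{2r+2−i}·D^β_{l−m−i}(D^β_{m+i}(w)) = Σ_{i=0}^{2r+2} binom(2r+2,i)·(−1)^{2r+2−i}·D_{l−m−i}(D_{m+i}(w)); that is, the operator ω^{(2r+2)}_{l,m} computed with the twisted operators D^β coincides with the one computed with the untwisted operators D. -/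
open Finsupp

variable {M : Type*} [AddCommGroup M] [Module ℂ M]

/-!
Since `D^β_n = D_n + β t^n`, the twisted `ω^{(s)}_{l,m}` is the untwisted one plus three
alternating sums of cross terms. The sum `Σ_i binom(s,i) (-1)^(s-i) f(i)` is the `s`-th forward
difference of `f` at `0`, so it kills every `f` that is polynomial in `i` of degree `< s`. On
`v ⊗ t^k`, both `D_{l-m-i} ∘ β t^{m+i}` and `β t^{l-m-i} ∘ D_{m+i}` are polynomial in `i` of degree
at most `r + 1` (the `T_p` enter with coefficients `(l-m-i)^{p+1}` resp. `(m+i)^{p+1}`), while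
`β t^{l-m-i} ∘ β t^{m+i}` does not depend on `i`. As `s = 2r+2 > r+1`, all three sums vanish.
-/

open Finset Polynomial

theorem sum_choose_mul_neg_one_pow_mul_eval_eq_zero {R : Type*} [CommRing R] {P : R[X]} {s : ℕ}
    (hP : P.natDegree < s) :
    ∑ i ∈ range (s + 1), ((s.choose i : R) * (-1) ^ (s - i)) * P.eval (i : R) = 0 := by
  have h := congrFun (Polynomial.fwdDiff_iter_eq_zero_of_degree_lt hP) 0
  rw [fwdDiff_iter_eq_sum_shift, Pi.zero_apply] at h
  rw [← h]
  refine sum_congr rfl fun i _ => ?_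
  simp only [zero_add, nsmul_eq_mul, mul_one, zsmul_eq_mul]
  push_cast
  ring

theorem sum_choose_smul_smul_eq_zero_of_eq_mul_pow {R V : Type*} [CommRing R] [AddCommGroup V]
    [Module R V] {s p : ℕ} (hp : p < s) (f : ℕ → R) (c x y : R)
    (hf : ∀ i : ℕ, f i = c * (x + y * i) ^ p) (u : V) :
    ∑ i ∈ range (s + 1), ((s.choose i : R) * (-1) ^ (s - i)) • (f i • u) = 0 := by
  have hdeg : (C c * (C x + C y * X) ^ p).natDegree < s :=
    lt_of_le_of_lt (by compute_degree) hp
  simp only [smul_smul, ← sum_smul, hf]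
  simpa using congrArg (· • u) (sum_choose_mul_neg_one_pow_mul_eval_eq_zero hdeg)

theorem sum_smul_sum_smul_single {R N ι κ α : Type*} [CommSemiring R] [AddCommMonoid N]
    [Module R N] (t : Finset κ) (e : κ → R) (u : Finset ι) (b : ι → R) (K : ι → α)
    (f : ι → κ → N) :
    ∑ i ∈ t, e i • ∑ j ∈ u, b j • single (K j) (f j i)
      = ∑ j ∈ u, b j • single (K j) (∑ i ∈ t, e i • f j i) := by
  simp only [Finset.smul_sum, single_finsetSum, smul_single, smul_comm (e _) (b _)]
  exact Finset.sum_comm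

theorem Dop_single_s16 (r : ℕ) (T : ℕ → Module.End ℂ M) (α : ℂ) (n k : ℤ) (v : M) :
    Dop r T α n (single k v) = single (k + n)
      ((α + k) • v + ∑ p ∈ range (r + 1), ((n : ℂ) ^ (p + 1) / (p + 1).factorial) • T p v) := by
  simp [Dop]

theorem Bop_single (β : ℤ →₀ ℂ) (n k : ℤ) (v : M) :
    Bop β n (single k v) = ∑ j ∈ β.support, β j • single (k + n + j) v := by
  simp [Bop]

theorem Bop_comp_Bop_of_add_eq (β : ℤ →₀ ℂ) {n₁ n₂ n₁' n₂' : ℤ} (h : n₁ + n₂ = n₁' + n₂') :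
    (Bop β n₁ ∘ₗ Bop β n₂ : (ℤ →₀ M) →ₗ[ℂ] ℤ →₀ M) = Bop β n₁' ∘ₗ Bop β n₂' := by
  refine Finsupp.lhom_ext fun k v => ?_
  have hidx : ∀ j : ℤ, k + n₂ + j + n₁ = k + n₂' + j + n₁' := fun j => by linear_combination h
  simp only [LinearMap.comp_apply, Bop_single, map_sum, map_smul, hidx]

section CrossTerms

variable (r : ℕ) (T : ℕ → Module.End ℂ M) (α : ℂ) (β : ℤ →₀ ℂ) {s : ℕ} (a b : ℤ)

theorem sum_choose_smul_Dop_comp_Bop (hs : r + 1 < s) :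
    ∑ i ∈ range (s + 1), ((s.choose i : ℂ) * (-1) ^ (s - i)) •
      (Dop r T α (a - i) ∘ₗ Bop β (b + i)) = 0 := by
  refine Finsupp.lhom_ext fun k v => ?_
  have hidx : ∀ (i : ℕ) (j : ℤ), k + (b + i) + j + (a - i) = k + a + b + j := fun i j => by ring
  simp only [LinearMap.sum_apply, LinearMap.smul_apply, LinearMap.comp_apply, Bop_single, map_sum,
    map_smul, Dop_single_s16, hidx, sum_smul_sum_smul_single, LinearMap.zero_apply]
  refine sum_eq_zero fun j _ => ?_
  rw [← smul_zero (β j), ← single_zero (k + a + b + j)]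
  congr 2
  simp only [smul_add, sum_add_distrib, Finset.smul_sum]
  rw [Finset.sum_comm, sum_choose_smul_smul_eq_zero_of_eq_mul_pow (p := 1) (by omega) _ (1 : ℂ)
    (α + k + b + j) 1 (fun i => by push_cast; ring), zero_add]
  exact sum_eq_zero fun p hp => sum_choose_smul_smul_eq_zero_of_eq_mul_pow (p := p + 1)
    (by rw [mem_range] at hp; omega) _ (1 / (p + 1).factorial : ℂ) a (-1)
    (fun i => by push_cast; ring) _

theorem sum_choose_smul_Bop_comp_Dop (hs : r + 1 < s) :
    ∑ i ∈ range (s + 1), ((s.choose i : ℂ) * (-1) ^ (s - i)) •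
      (Bop β (a - i) ∘ₗ Dop r T α (b + i)) = 0 := by
  refine Finsupp.lhom_ext fun k v => ?_
  have hidx : ∀ (i : ℕ) (j : ℤ), k + (b + i) + (a - i) + j = k + a + b + j := fun i j => by ring
  simp only [LinearMap.sum_apply, LinearMap.smul_apply, LinearMap.comp_apply, Bop_single,
    Dop_single_s16, hidx, sum_smul_sum_smul_single, LinearMap.zero_apply]
  refine sum_eq_zero fun j _ => ?_
  rw [← smul_zero (β j), ← single_zero (k + a + b + j)]
  congr 2
  simp only [smul_add, sum_add_distrib, Finset.smul_sum]
  rw [Finset.sum_comm, sum_choose_smul_smul_eq_zero_of_eq_mul_pow (p := 0) (by omega) _ (α + k)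
    0 0 (fun i => by ring), zero_add]
  exact sum_eq_zero fun p hp => sum_choose_smul_smul_eq_zero_of_eq_mul_pow (p := p + 1)
    (by rw [mem_range] at hp; omega) _ (1 / (p + 1).factorial : ℂ) b 1
    (fun i => by push_cast; ring) _

theorem sum_choose_smul_Bop_comp_Bop (hs : 0 < s) :
    ∑ i ∈ range (s + 1), ((s.choose i : ℂ) * (-1) ^ (s - i)) •
      (Bop β (a - i) ∘ₗ Bop β (b + i) : (ℤ →₀ M) →ₗ[ℂ] ℤ →₀ M) = 0 := by
  have hconst : ∀ i : ℕ, (Bop β (a - i) ∘ₗ Bop β (b + i) : (ℤ →₀ M) →ₗ[ℂ] ℤ →₀ M)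
      = Bop β a ∘ₗ Bop β b := fun i => Bop_comp_Bop_of_add_eq β (by ring)
  simpa [hconst] using sum_choose_smul_smul_eq_zero_of_eq_mul_pow hs (fun _ => (1 : ℂ)) 1 0 0
    (by simp) (Bop β a ∘ₗ Bop β b : (ℤ →₀ M) →ₗ[ℂ] ℤ →₀ M)

end CrossTerms

theorem sum_choose_smul_DBop_comp_DBop (r : ℕ) (T : ℕ → Module.End ℂ M) (β : ℤ →₀ ℂ) {s : ℕ}
    (hs : r + 1 < s) (l m : ℤ) :
    ∑ i ∈ range (s + 1), ((s.choose i : ℂ) * (-1) ^ (s - i)) •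
      (DBop r T β (l - m - i) ∘ₗ DBop r T β (m + i)) = omegaOp r T 0 s l m := by
  simp only [DBop, LinearMap.add_comp, LinearMap.comp_add, smul_add, sum_add_distrib,
    sum_choose_smul_Dop_comp_Bop r T 0 β (l - m) m hs,
    sum_choose_smul_Bop_comp_Dop r T 0 β (l - m) m hs,
    sum_choose_smul_Bop_comp_Bop β (l - m) m (by omega : 0 < s), add_zero, omegaOp]

theorem twisted_omega_eq_untwisted_general (r : ℕ) (T : ℕ → Module.End ℂ M)
    (β : ℤ →₀ ℂ) (l m : ℤ) (w : ℤ →₀ M) :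
    ∑ i ∈ Finset.range (2 * r + 3),
        (((2 * r + 2).choose i : ℂ) * (-1) ^ (2 * r + 2 - i)) •
          DBop r T β (l - m - (i : ℤ)) (DBop r T β (m + (i : ℤ)) w)
      = ∑ i ∈ Finset.range (2 * r + 3),
          (((2 * r + 2).choose i : ℂ) * (-1) ^ (2 * r + 2 - i)) •
            Dop r T 0 (l - m - (i : ℤ)) (Dop r T 0 (m + (i : ℤ)) w) := by
  have h := LinearMap.congr_fun
    (sum_choose_smul_DBop_comp_DBop r T β (s := 2 * r + 2) (by omega) l m) w
  simp only [omegaOp, LinearMap.sum_apply, LinearMap.smul_apply, LinearMap.comp_apply] at h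
  exact h

/-- for `r ≥ 1`, an `a_r`-module `M` and a Laurent polynomial `β`, the operator
`ω^{(2r+2)}_{l,m}` computed with the twisted operators `D^β` coincides with the one computed
with the untwisted operators `D`. -/
theorem twisted_omega_eq_untwisted (r : ℕ) (hr : 1 ≤ r) (T : ℕ → Module.End ℂ M)
    (hT : IsArModule r T) (β : ℤ →₀ ℂ) (l m : ℤ) (w : ℤ →₀ M) :
    ∑ i ∈ Finset.range (2 * r + 3),
        (((2 * r + 2).choose i : ℂ) * (-1) ^ (2 * r + 2 - i)) •
          DBop r T β (l - m - (i : ℤ)) (DBop r T β (m + (i : ℤ)) w)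
      = ∑ i ∈ Finset.range (2 * r + 3),
          (((2 * r + 2).choose i : ℂ) * (-1) ^ (2 * r + 2 - i)) •
            Dop r T 0 (l - m - (i : ℤ)) (Dop r T 0 (m + (i : ℤ)) w) :=
  twisted_omega_eq_untwisted_general r T β l m w
end
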